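/- arXiv:1406.2582 — 4 statements merged into one kernel-verified Lean document; each statement's English description precedes it below -/
import Mathlib

section
/- The thrice-integrated Wiener process covariance, defined by k³(t,t') = ∫₀ᵗ∫₀^{t'} k²(u,v) dv du where k² is the twice-integrated Wiener covariance, equals σ²·(min(t,t')⁷/252 + (|t−t'|·min(t,t')⁴/720)·(5·max(t,t')² + 2tt' + 3·min(t,t')²)). -/
open MeasureTheory intervalIntegral

/-- The twice-integrated Wiener process covariance function. -/
noncomputable def k2 (σ2 t t' : ℝ) : ℝ :=
  σ2 * ((min t t') ^ 5 / 20 +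
    (|t - t'| / 12) * ((t + t') * (min t t') ^ 3 - (min t t') ^ 4 / 2))

lemma intpoly (a b c0 c1 c2 c3 c4 c5 c6 : ℝ) :
    (∫ x in a..b, (c0 + c1 * x + c2 * x ^ 2 + c3 * x ^ 3 + c4 * x ^ 4 + c5 * x ^ 5
        + c6 * x ^ 6))
    = (c0 * b + c1 * b ^ 2 / 2 + c2 * b ^ 3 / 3 + c3 * b ^ 4 / 4 + c4 * b ^ 5 / 5
        + c5 * b ^ 6 / 6 + c6 * b ^ 7 / 7)
      - (c0 * a + c1 * a ^ 2 / 2 + c2 * a ^ 3 / 3 + c3 * a ^ 4 / 4 + c4 * a ^ 5 / 5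
        + c5 * a ^ 6 / 6 + c6 * a ^ 7 / 7) := by
  have hI : ∀ (n : ℕ) (c : ℝ), IntervalIntegrable (fun x : ℝ => c * x ^ n) volume a b :=
    fun n c => (Continuous.intervalIntegrable (by continuity) a b)
  have key : (∫ x in a..b, (c0 * x ^ 0 + (c1 * x ^ 1 + (c2 * x ^ 2 + (c3 * x ^ 3
      + (c4 * x ^ 4 + (c5 * x ^ 5 + c6 * x ^ 6)))))))
      = c0 * ((b ^ 1 - a ^ 1) / 1) + (c1 * ((b ^ 2 - a ^ 2) / 2)
        + (c2 * ((b ^ 3 - a ^ 3) / 3) + (c3 * ((b ^ 4 - a ^ 4) / 4)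
        + (c4 * ((b ^ 5 - a ^ 5) / 5) + (c5 * ((b ^ 6 - a ^ 6) / 6)
        + c6 * ((b ^ 7 - a ^ 7) / 7)))))) := by
    have J5 := (hI 5 c5).add (hI 6 c6)
    have J4 := (hI 4 c4).add J5
    have J3 := (hI 3 c3).add J4
    have J2 := (hI 2 c2).add J3
    have J1 := (hI 1 c1).add J2
    rw [intervalIntegral.integral_add (hI 0 c0) J1,
      intervalIntegral.integral_add (hI 1 c1) J2,
      intervalIntegral.integral_add (hI 2 c2) J3,
      intervalIntegral.integral_add (hI 3 c3) J4,
      intervalIntegral.integral_add (hI 4 c4) J5,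
      intervalIntegral.integral_add (hI 5 c5) (hI 6 c6)]
    simp only [intervalIntegral.integral_const_mul, integral_pow]
    norm_num
  have hfun : Set.EqOn (fun x : ℝ => c0 + c1 * x + c2 * x ^ 2 + c3 * x ^ 3 + c4 * x ^ 4
      + c5 * x ^ 5 + c6 * x ^ 6)
      (fun x : ℝ => c0 * x ^ 0 + (c1 * x ^ 1 + (c2 * x ^ 2 + (c3 * x ^ 3
      + (c4 * x ^ 4 + (c5 * x ^ 5 + c6 * x ^ 6)))))) (Set.uIcc a b) := by
    intro x _; ring
  rw [intervalIntegral.integral_congr hfun, key]; ring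

lemma k2_cont (σ2 u : ℝ) : Continuous (fun v => k2 σ2 u v) := by
  unfold k2
  fun_prop

/-- inner integral when `b ≤ u`. -/
lemma inner_ge (σ2 u b : ℝ) (hb : 0 ≤ b) (hbu : b ≤ u) :
    (∫ v in (0:ℝ)..b, k2 σ2 u v)
      = σ2 * (u ^ 2 * b ^ 4 / 48 - u * b ^ 5 / 120 + b ^ 6 / 720) := by
  have hfun : Set.EqOn (fun v => k2 σ2 u v)
      (fun v : ℝ => 0 + 0 * v + 0 * v ^ 2 + (σ2 * u ^ 2 / 12) * v ^ 3
        + (-(σ2 * u) / 24) * v ^ 4 + (σ2 / 120) * v ^ 5 + 0 * v ^ 6) (Set.uIcc 0 b) := by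
    intro v hv
    rw [Set.uIcc_of_le hb] at hv
    have h1 : v ≤ u := le_trans hv.2 hbu
    simp only [k2, min_eq_right h1, abs_of_nonneg (sub_nonneg.2 h1)]
    ring
  rw [intervalIntegral.integral_congr hfun, intpoly]
  ring

/-- inner integral when `0 ≤ u ≤ b`. -/
lemma inner_le (σ2 u b : ℝ) (hu : 0 ≤ u) (hub : u ≤ b) :
    (∫ v in (0:ℝ)..b, k2 σ2 u v)
      = σ2 * (b ^ 3 * u ^ 3 / 36 - b ^ 2 * u ^ 4 / 48 + b * u ^ 5 / 120 - u ^ 6 / 720) := by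
  have hint : ∀ x y : ℝ, IntervalIntegrable (fun v => k2 σ2 u v) volume x y :=
    fun x y => (k2_cont σ2 u).intervalIntegrable x y
  rw [← intervalIntegral.integral_add_adjacent_intervals (a := (0:ℝ)) (b := u) (c := b)
    (hint 0 u) (hint u b)]
  have h1 : (∫ v in (0:ℝ)..u, k2 σ2 u v)
      = σ2 * (u ^ 2 * u ^ 4 / 48 - u * u ^ 5 / 120 + u ^ 6 / 720) :=
    inner_ge σ2 u u hu le_rfl
  have hfun2 : Set.EqOn (fun v => k2 σ2 u v)
      (fun v : ℝ => (σ2 * u ^ 5 / 120) + (-(σ2 * u ^ 4) / 24) * v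
        + (σ2 * u ^ 3 / 12) * v ^ 2 + 0 * v ^ 3 + 0 * v ^ 4 + 0 * v ^ 5 + 0 * v ^ 6)
      (Set.uIcc u b) := by
    intro v hv
    rw [Set.uIcc_of_le hub] at hv
    have h1 : u ≤ v := hv.1
    have h2 : u - v ≤ 0 := by linarith
    simp only [k2, min_eq_left h1, abs_of_nonpos h2]
    ring
  rw [h1, intervalIntegral.integral_congr hfun2, intpoly]
  ring

/-- The thrice-integrated Wiener process covariance equals
    `σ² (min⁷/252 + (|t−t'| min⁴/720)(5 max² + 2tt' + 3 min²))`. -/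
theorem thriceIntegratedWiener_cov (σ2 t t' : ℝ) (hσ : 0 < σ2) (ht : 0 < t) (ht' : 0 < t') :
    (∫ u in (0:ℝ)..t, ∫ v in (0:ℝ)..t', k2 σ2 u v) =
      σ2 * ((min t t') ^ 7 / 252 +
        (|t - t'| * (min t t') ^ 4 / 720) *
          (5 * (max t t') ^ 2 + 2 * t * t' + 3 * (min t t') ^ 2)) := by
  rcases le_total t t' with h | h
  · -- t ≤ t'
    have hfun : Set.EqOn (fun u => ∫ v in (0:ℝ)..t', k2 σ2 u v)
        (fun u : ℝ => 0 + 0 * u + 0 * u ^ 2 + (σ2 * t' ^ 3 / 36) * u ^ 3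
          + (-(σ2 * t' ^ 2) / 48) * u ^ 4 + (σ2 * t' / 120) * u ^ 5
          + (-σ2 / 720) * u ^ 6) (Set.uIcc 0 t) := by
      intro u hu
      rw [Set.uIcc_of_le ht.le] at hu
      have := inner_le σ2 u t' hu.1 (le_trans hu.2 h)
      simp only [this]; ring
    rw [intervalIntegral.integral_congr hfun, intpoly,
      min_eq_left h, max_eq_right h, abs_of_nonpos (by linarith : t - t' ≤ 0)]
    ring
  · -- t' ≤ t
    have hint1 : IntervalIntegrable (fun u => ∫ v in (0:ℝ)..t', k2 σ2 u v) volume 0 t' := by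
      apply IntervalIntegrable.congr_ae (f := fun u : ℝ =>
        σ2 * (t' ^ 3 * u ^ 3 / 36 - t' ^ 2 * u ^ 4 / 48 + t' * u ^ 5 / 120 - u ^ 6 / 720))
        (Continuous.intervalIntegrable (by continuity) 0 t')
      filter_upwards [ae_restrict_mem measurableSet_Ioc] with u hu
      rw [Set.uIoc_of_le ht'.le] at hu
      exact (inner_le σ2 u t' hu.1.le hu.2).symm
    have hint2 : IntervalIntegrable (fun u => ∫ v in (0:ℝ)..t', k2 σ2 u v) volume t' t := by
      apply IntervalIntegrable.congr_ae (f := fun u : ℝ =>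
        σ2 * (u ^ 2 * t' ^ 4 / 48 - u * t' ^ 5 / 120 + t' ^ 6 / 720))
        (Continuous.intervalIntegrable (by continuity) t' t)
      filter_upwards [ae_restrict_mem measurableSet_Ioc] with u hu
      rw [Set.uIoc_of_le h] at hu
      exact (inner_ge σ2 u t' ht'.le hu.1.le).symm
    rw [← intervalIntegral.integral_add_adjacent_intervals (a := (0:ℝ)) (b := t') (c := t)
      hint1 hint2]
    have hA : (∫ u in (0:ℝ)..t', ∫ v in (0:ℝ)..t', k2 σ2 u v)
        = σ2 * (t' ^ 7 / 252) := by
      have hfun : Set.EqOn (fun u => ∫ v in (0:ℝ)..t', k2 σ2 u v)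
          (fun u : ℝ => 0 + 0 * u + 0 * u ^ 2 + (σ2 * t' ^ 3 / 36) * u ^ 3
            + (-(σ2 * t' ^ 2) / 48) * u ^ 4 + (σ2 * t' / 120) * u ^ 5
            + (-σ2 / 720) * u ^ 6) (Set.uIcc 0 t') := by
        intro u hu
        rw [Set.uIcc_of_le ht'.le] at hu
        have := inner_le σ2 u t' hu.1 hu.2
        simp only [this]; ring
      rw [intervalIntegral.integral_congr hfun, intpoly]; ring
    have hB : (∫ u in t'..t, ∫ v in (0:ℝ)..t', k2 σ2 u v)
        = σ2 * ((t ^ 3 - t' ^ 3) * t' ^ 4 / 144 - (t ^ 2 - t' ^ 2) * t' ^ 5 / 240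
          + (t - t') * t' ^ 6 / 720) := by
      have hfun : Set.EqOn (fun u => ∫ v in (0:ℝ)..t', k2 σ2 u v)
          (fun u : ℝ => (σ2 * t' ^ 6 / 720) + (-(σ2 * t' ^ 5) / 120) * u
            + (σ2 * t' ^ 4 / 48) * u ^ 2 + 0 * u ^ 3 + 0 * u ^ 4 + 0 * u ^ 5 + 0 * u ^ 6)
          (Set.uIcc t' t) := by
        intro u hu
        rw [Set.uIcc_of_le h] at hu
        have := inner_ge σ2 u t' ht'.le hu.1
        simp only [this]; ring
      rw [intervalIntegral.integral_congr hfun, intpoly]; ring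
    rw [hA, hB, min_eq_right h, max_eq_left h, abs_of_nonneg (by linarith : 0 ≤ t - t')]
    ring
end

section
/- For the once-integrated Wiener process prior with constant observation location t₀ > 0 and h > 0, the posterior mean at t₀ + h after observing x(t₀) = x₀ and ẋ(t₀) = y₁ equals x₀ + h·y₁ (Euler's method). That is, [k(t₀+h,t₀), k^∂(t₀+h,t₀)] · [[k(t₀,t₀), k^∂(t₀,t₀)],[^∂k(t₀,t₀), ^∂k^∂(t₀,t₀)]]⁻¹ · (x₀, y₁)ᵀ = x₀ + h·y₁, where the Gram matrix entries are k(t₀,t₀) = t₀³/3, k^∂(t₀,t₀) = ^∂k(t₀,t₀) = t₀²/2, ^∂k^∂(t₀,t₀) = t₀. -/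
open Matrix

/-- For the once-integrated Wiener process prior, the GP posterior mean at `t₀ + h`
    after observing `x(t₀) = x₀` and `ẋ(t₀) = y₁` equals Euler's prediction `x₀ + h y₁`. -/
theorem onceIntegratedWiener_euler (t0 h x0 y1 : ℝ) (ht0 : 0 < t0) (hh : 0 < h) :
    ![t0 ^ 3 / 3 + h * t0 ^ 2 / 2, (t0 + h) * t0 - t0 ^ 2 / 2] ⬝ᵥ
        ((!![t0 ^ 3 / 3, t0 ^ 2 / 2; t0 ^ 2 / 2, t0])⁻¹ *ᵥ ![x0, y1]) =
      x0 + h * y1 := by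
  have hdet : (!![t0 ^ 3 / 3, t0 ^ 2 / 2; t0 ^ 2 / 2, t0]).det = t0 ^ 4 / 12 := by
    simp [Matrix.det_fin_two_of]; ring
  rw [Matrix.inv_def, hdet]
  simp [Matrix.adjugate_fin_two, Matrix.mulVec, dotProduct, Fin.sum_univ_two]
  have h4 : t0 ^ 4 ≠ 0 := by positivity
  field_simp
  ring
end

section
/- For the twice-integrated Wiener process with σ² = 1, let t₀ > 0, h > 0, α ∈ (0,1]. Then the GP posterior weight vector [k(t₀+hα,t₀), k^∂(t₀+hα,t₀)] · [[t₀⁵/20, t₀⁴/8],[t₀⁴/8, t₀³/3]]⁻¹ equals [1 − 10(hα)²/(3t₀²), hα + 2(hα)²/t₀]. -/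
open Matrix

/-- The twice-integrated Wiener GP posterior weight vector at `t₀ + hα` after
    observations at `t₀` equals `[1 − 10(hα)²/(3t₀²), hα + 2(hα)²/t₀]`. -/
theorem twiceIntegratedWiener_weights (t0 h α : ℝ) (ht0 : 0 < t0) (hh : 0 < h)
    (hα0 : 0 < α) (hα1 : α ≤ 1) :
    ![t0 ^ 3 * (10 * (h * α) ^ 2 + 15 * (h * α) * t0 + 6 * t0 ^ 2) / 120,
        t0 ^ 2 * (6 * (h * α) ^ 2 + 8 * (h * α) * t0 + 3 * t0 ^ 2) / 24] ᵥ*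
        (!![t0 ^ 5 / 20, t0 ^ 4 / 8; t0 ^ 4 / 8, t0 ^ 3 / 3])⁻¹ =
      ![1 - 10 * (h * α) ^ 2 / (3 * t0 ^ 2), h * α + 2 * (h * α) ^ 2 / t0] := by
  have ht0' : t0 ≠ 0 := ne_of_gt ht0
  have hdet : (!![t0 ^ 5 / 20, t0 ^ 4 / 8; t0 ^ 4 / 8, t0 ^ 3 / 3] : Matrix (Fin 2) (Fin 2) ℝ).det ≠ 0 := by
    simp [Matrix.det_fin_two_of]
    intro hc
    apply ht0'
    have : t0 ^ 8 = 0 := by nlinarith [hc]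
    exact pow_eq_zero_iff (by norm_num) |>.mp this
  have hA : (![1 - 10 * (h * α) ^ 2 / (3 * t0 ^ 2), h * α + 2 * (h * α) ^ 2 / t0]) ᵥ*
      (!![t0 ^ 5 / 20, t0 ^ 4 / 8; t0 ^ 4 / 8, t0 ^ 3 / 3]) =
      ![t0 ^ 3 * (10 * (h * α) ^ 2 + 15 * (h * α) * t0 + 6 * t0 ^ 2) / 120,
        t0 ^ 2 * (6 * (h * α) ^ 2 + 8 * (h * α) * t0 + 3 * t0 ^ 2) / 24] := by
    funext i
    fin_cases i <;>
      simp [Matrix.vecMul, dotProduct] <;> field_simp <;> ring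
  rw [← hA, Matrix.vecMul_vecMul, Matrix.mul_nonsing_inv _ (isUnit_iff_ne_zero.mpr hdet), Matrix.vecMul_one]
end

section
/- For the square-exponential kernel k(t,t') = θ²·exp(−(t−t')²/(2λ²)) with θ, λ > 0, the GP posterior mean at t₀ + h given observations x(t₀) = x₀ (of the function) and ẋ(t₀) = y₁ (of the derivative) equals exp(−h²/(2λ²))·x₀ + h·exp(−h²/(2λ²))·y₁. In particular, for finite λ and h ≠ 0 and (x₀,y₁) ≠ 0 generic, this differs from Euler's prediction x₀ + h·y₁. -/
open Matrix

/-- For the square-exponential kernel, the GP posterior mean at `t₀ + h` given a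
    function observation `x₀` and a derivative observation `y₁` at `t₀` equals
    `exp(−h²/(2λ²)) x₀ + h exp(−h²/(2λ²)) y₁`, which differs from Euler's
    prediction `x₀ + h y₁` whenever `h ≠ 0` and `x₀ + h y₁ ≠ 0`. -/
theorem se_kernel_not_euler (θ l t0 h x0 y1 : ℝ) (hθ : 0 < θ) (hl : 0 < l) :
    (![θ ^ 2 * Real.exp (-h ^ 2 / (2 * l ^ 2)),
        (h / l ^ 2) * (θ ^ 2 * Real.exp (-h ^ 2 / (2 * l ^ 2)))] ⬝ᵥ
        ((!![θ ^ 2, 0; 0, θ ^ 2 / l ^ 2])⁻¹ *ᵥ ![x0, y1]) =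
      Real.exp (-h ^ 2 / (2 * l ^ 2)) * x0 + h * Real.exp (-h ^ 2 / (2 * l ^ 2)) * y1) ∧
    (h ≠ 0 → x0 + h * y1 ≠ 0 →
      Real.exp (-h ^ 2 / (2 * l ^ 2)) * x0 + h * Real.exp (-h ^ 2 / (2 * l ^ 2)) * y1 ≠
        x0 + h * y1) := by
  have hθ2 : (θ : ℝ) ^ 2 ≠ 0 := pow_ne_zero _ hθ.ne'
  have hl2 : (l : ℝ) ^ 2 ≠ 0 := pow_ne_zero _ hl.ne'
  have hinv : (!![θ ^ 2, 0; 0, θ ^ 2 / l ^ 2])⁻¹ =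
      !![(θ ^ 2)⁻¹, 0; 0, l ^ 2 / θ ^ 2] := by
    apply inv_eq_right_inv
    ext i j
    fin_cases i <;> fin_cases j <;>
      simp [Matrix.mul_apply, Fin.sum_univ_two] <;> field_simp
  constructor
  · rw [hinv]
    simp [Matrix.mulVec, dotProduct, Fin.sum_univ_two]
    field_simp
  · intro hh hxy
    have he : Real.exp (-h ^ 2 / (2 * l ^ 2)) < 1 := by
      rw [Real.exp_lt_one_iff]
      have h2 : 0 < h ^ 2 := by positivity
      have hl2p : 0 < 2 * l ^ 2 := by positivity
      exact div_neg_of_neg_of_pos (by linarith) hl2p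
    have key : Real.exp (-h ^ 2 / (2 * l ^ 2)) * x0 +
        h * Real.exp (-h ^ 2 / (2 * l ^ 2)) * y1 =
        Real.exp (-h ^ 2 / (2 * l ^ 2)) * (x0 + h * y1) := by ring
    rw [key]
    intro hcontra
    have heq : Real.exp (-h ^ 2 / (2 * l ^ 2)) * (x0 + h * y1) = 1 * (x0 + h * y1) := by
      rw [hcontra]; ring
    rcases mul_eq_mul_right_iff.mp heq with h1 | h2
    · linarith
    · exact hxy h2
end
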